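/- arXiv:2401.02289 — 4 statements merged into one kernel-verified Lean document; each statement's English description precedes it below -/
import Mathlib

section
/- Let α and β be finite nonempty types with decidable equality and let G be a simple graph on α × β with at least one edge such that every edge joins vertices with equal first coordinate, i.e. G.Adj (i,j) (k,l) → i = k for all i, k : α and j, l : β. Then the graph Laplacian state ρ_G is separable (as a state on ℂ^α ⊗ ℂ^β). -/
open Matrix Kronecker ComplexOrder

noncomputable section

/-- A density matrix: positive semidefinite with trace 1. -/
def IsDensityMatrix {n : Type*} [Fintype n] (ρ : Matrix n n ℂ) : Prop :=
  ρ.PosSemidef ∧ ρ.trace = 1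

/-- Separability of a bipartite density matrix: a convex combination of Kronecker
products of density matrices of the subsystems. -/
def Separable {α β : Type*} [Fintype α] [Fintype β]
    (ρ : Matrix (α × β) (α × β) ℂ) : Prop :=
  ∃ (n : ℕ) (p : Fin n → ℝ) (σ : Fin n → Matrix α α ℂ) (τ : Fin n → Matrix β β ℂ),
    (∀ k, 0 ≤ p k) ∧ (∑ k, p k = 1) ∧
    (∀ k, (σ k).PosSemidef ∧ (σ k).trace = 1) ∧
    (∀ k, (τ k).PosSemidef ∧ (τ k).trace = 1) ∧
    ρ = ∑ k, (p k : ℂ) • (σ k ⊗ₖ τ k)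

/-- The `(x,y)`-block of a bipartite matrix. -/
def matBlock {α β : Type*} (ρ : Matrix (α × β) (α × β) ℂ) (x y : α) :
    Matrix β β ℂ :=
  Matrix.of fun j l => ρ (x, j) (y, l)

/-- The graph Laplacian quantum state of a simple graph. -/
def lapState {V : Type*} [Fintype V] [DecidableEq V] (G : SimpleGraph V)
    [DecidableRel G.Adj] : Matrix V V ℂ :=
  ((2 * G.edgeFinset.card : ℂ))⁻¹ • G.lapMatrix ℂ

/-!
If every edge stays inside a fibre `{a} × β`, the Laplacian is block diagonal,
`L_G = ∑ₐ Eₐₐ ⊗ L_{Gₐ}` with `Gₐ` the graph induced on the fibre. Normalising gives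
`ρ_G = ∑ₐ (|E(Gₐ)| / |E(G)|) • Eₐₐ ⊗ ρ_{Gₐ}`, a convex combination of product states once the
edgeless fibres, which carry weight `0`, are discarded.
-/

open SimpleGraph Finset

section Separable

variable {α β ι : Type*} [Fintype α] [Fintype β] [Fintype ι]

theorem separable_sum_kronecker (p : ι → ℝ) (σ : ι → Matrix α α ℂ) (τ : ι → Matrix β β ℂ)
    (hp : ∀ i, 0 ≤ p i) (hp₁ : ∑ i, p i = 1) (hσ : ∀ i, IsDensityMatrix (σ i))
    (hτ : ∀ i, IsDensityMatrix (τ i)) :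
    Separable (∑ i, (p i : ℂ) • (σ i ⊗ₖ τ i)) :=
  let e := (Fintype.equivFin ι).symm
  ⟨_, p ∘ e, σ ∘ e, τ ∘ e, fun _ ↦ hp _, (e.sum_comp p).trans hp₁, fun _ ↦ hσ _, fun _ ↦ hτ _,
    (e.sum_comp fun i ↦ (p i : ℂ) • (σ i ⊗ₖ τ i)).symm⟩

theorem separable_sum_kronecker_of_ne_zero (p : ι → ℝ) (σ : ι → Matrix α α ℂ)
    (τ : ι → Matrix β β ℂ) (hp : ∀ i, 0 ≤ p i) (hp₁ : ∑ i, p i = 1)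
    (hσ : ∀ i, p i ≠ 0 → IsDensityMatrix (σ i)) (hτ : ∀ i, p i ≠ 0 → IsDensityMatrix (τ i)) :
    Separable (∑ i, (p i : ℂ) • (σ i ⊗ₖ τ i)) := by
  classical
  let s := univ.filter fun i ↦ p i ≠ 0
  rw [← sum_filter_of_ne (p := fun i ↦ p i ≠ 0) fun i _ h hpi ↦ h (by simp [hpi]), ← sum_coe_sort]
  exact separable_sum_kronecker (fun i : s ↦ p i) (fun i ↦ σ i) (fun i ↦ τ i) (fun i ↦ hp i)
    ((sum_coe_sort s p).trans ((sum_filter_ne_zero univ).trans hp₁))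
    (fun i ↦ hσ i (mem_filter.mp i.2).2) (fun i ↦ hτ i (mem_filter.mp i.2).2)

theorem isDensityMatrix_single [DecidableEq α] (a : α) : IsDensityMatrix (single a a (1 : ℂ)) := by
  rw [← diagonal_single]
  refine ⟨PosSemidef.diagonal fun i ↦ ?_, by simp⟩
  rw [Pi.single_apply]
  split_ifs <;> simp

end Separable

open scoped MatrixOrder in
theorem Matrix.PosSemidef.map_ofReal {𝕜 n : Type*} [RCLike 𝕜] [Fintype n]
    {A : Matrix n n ℝ} (hA : A.PosSemidef) : (A.map (RCLike.ofReal : ℝ → 𝕜)).PosSemidef := by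
  classical
  obtain ⟨B, rfl⟩ := CStarAlgebra.nonneg_iff_eq_star_mul_self.mp hA.nonneg
  have : (star B * B).map (RCLike.ofReal : ℝ → 𝕜) =
      (B.map RCLike.ofReal)ᴴ * B.map RCLike.ofReal := by
    ext
    simp [mul_apply]
  rw [this]
  exact posSemidef_conjTranspose_mul_self _

namespace SimpleGraph

variable {V : Type*} [Fintype V] [DecidableEq V] (G : SimpleGraph V) [DecidableRel G.Adj]

theorem lapMatrix_map {R S : Type*} [Ring R] [Ring S] (f : R →+* S) :
    (G.lapMatrix R).map f = G.lapMatrix S := by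
  ext v w
  by_cases h : v = w <;> by_cases hadj : G.Adj v w <;>
    simp [lapMatrix, degMatrix, adjMatrix_apply, h, hadj]

theorem posSemidef_lapMatrix_rclike {𝕜 : Type*} [RCLike 𝕜] : (G.lapMatrix 𝕜).PosSemidef := by
  simpa only [← lapMatrix_map G (algebraMap ℝ 𝕜)] using (G.posSemidef_lapMatrix ℝ).map_ofReal

theorem trace_lapMatrix {R : Type*} [Ring R] :
    (G.lapMatrix R).trace = 2 * #G.edgeFinset := by
  rw [lapMatrix, trace_sub, trace_adjMatrix, sub_zero, degMatrix, trace_diagonal,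
    ← Nat.cast_sum, sum_degrees_eq_twice_card_edges, Nat.cast_mul, Nat.cast_ofNat]

theorem lapMatrix_eq_zero_of_edgeFinset_eq_empty {R : Type*} [AddCommGroupWithOne R]
    (h : G.edgeFinset = ∅) : G.lapMatrix R = 0 := by
  have hadj (v w : V) : ¬G.Adj v w := fun hvw ↦ by
    simpa [h] using G.mem_edgeFinset.mpr (G.mem_edgeSet.mpr hvw)
  ext v w
  simp [lapMatrix, degMatrix, G.degree_eq_sum_if_adj (R := R), hadj]

theorem isDensityMatrix_lapState (hE : G.edgeFinset.Nonempty) : IsDensityMatrix (lapState G) := by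
  have hE' : (2 * #G.edgeFinset : ℂ) ≠ 0 := by simpa using hE.card_pos.ne'
  refine ⟨G.posSemidef_lapMatrix_rclike.smul (by positivity), ?_⟩
  rw [lapState, trace_smul, trace_lapMatrix, smul_eq_mul, inv_mul_cancel₀ hE']

end SimpleGraph

section Fibers

variable {α β : Type*} [Fintype α] [Fintype β] {G : SimpleGraph (α × β)} [DecidableRel G.Adj]

theorem degree_comap_prodMk (hG : ∀ x y, G.Adj x y → x.1 = y.1) (a : α) (b : β) :
    (G.comap (Prod.mk a)).degree b = G.degree (a, b) := by
  rw [← Nat.cast_id ((G.comap _).degree b), ← Nat.cast_id (G.degree _), degree_eq_sum_if_adj,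
    degree_eq_sum_if_adj, Fintype.sum_prod_type, sum_eq_single a]
  · rfl
  · intro a' _ ha'
    exact sum_eq_zero fun b' _ ↦ if_neg fun h ↦ ha' (hG _ _ h).symm
  · simp

theorem sum_card_edgeFinset_comap_prodMk (hG : ∀ x y, G.Adj x y → x.1 = y.1) :
    ∑ a, #(G.comap (Prod.mk a)).edgeFinset = #G.edgeFinset := by
  have h : 2 * ∑ a, #(G.comap (Prod.mk a)).edgeFinset = 2 * #G.edgeFinset := calc
    _ = ∑ a, ∑ b, (G.comap (Prod.mk a)).degree b := by
      simp only [mul_sum, sum_degrees_eq_twice_card_edges]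
    _ = ∑ x, G.degree x := by simp only [Fintype.sum_prod_type, degree_comap_prodMk hG]
    _ = _ := G.sum_degrees_eq_twice_card_edges
  omega

variable [DecidableEq α] [DecidableEq β]

theorem lapMatrix_eq_sum_single_kronecker_comap_prodMk {R : Type*} [Ring R]
    (hG : ∀ x y, G.Adj x y → x.1 = y.1) :
    G.lapMatrix R = ∑ a, single a a 1 ⊗ₖ (G.comap (Prod.mk a)).lapMatrix R := by
  ext ⟨a, b⟩ ⟨a', b'⟩
  simp only [Matrix.sum_apply, kroneckerMap_apply, single_apply, ite_mul, one_mul, zero_mul]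
  by_cases h : a = a'
  · subst h
    simp [sum_ite_eq', lapMatrix, degMatrix, diagonal_apply, adjMatrix_apply,
      degree_comap_prodMk hG]
  · have hadj : ¬G.Adj (a, b) (a', b') := fun hadj ↦ h (hG _ _ hadj)
    rw [sum_eq_zero fun c _ ↦ if_neg fun hc ↦ h (hc.1.symm.trans hc.2)]
    simp [lapMatrix, degMatrix, adjMatrix_apply, h, hadj]

theorem lapState_eq_sum_single_kronecker_lapState_comap_prodMk (hG : ∀ x y, G.Adj x y → x.1 = y.1) :
    lapState G = ∑ a, ((#(G.comap (Prod.mk a)).edgeFinset / #G.edgeFinset : ℝ) : ℂ) •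
      (single a a 1 ⊗ₖ lapState (G.comap (Prod.mk a))) := by
  rw [lapState, lapMatrix_eq_sum_single_kronecker_comap_prodMk hG, smul_sum]
  refine sum_congr rfl fun a _ ↦ ?_
  -- an edgeless fibre has weight `0` and, since `0⁻¹ = 0`, also `lapState` equal to `0`
  by_cases ha : #(G.comap (Prod.mk a)).edgeFinset = 0
  · simp [lapMatrix_eq_zero_of_edgeFinset_eq_empty _ (card_eq_zero.mp ha), ha]
  · rw [lapState, kronecker_smul, smul_smul]
    congr 1
    push_cast
    field_simp

end Fibers

theorem equal_first_coordinate_edges_separable_general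
    {α β : Type*} [Fintype α] [Fintype β]
    [DecidableEq α] [DecidableEq β]
    (G : SimpleGraph (α × β)) [DecidableRel G.Adj]
    (hE : G.edgeFinset.Nonempty)
    (hAdj : ∀ (i k : α) (j l : β), G.Adj (i, j) (k, l) → i = k) :
    Separable (lapState G) := by
  have hG : ∀ x y, G.Adj x y → x.1 = y.1 := fun _ _ ↦ hAdj _ _ _ _
  rw [lapState_eq_sum_single_kronecker_lapState_comap_prodMk hG]
  refine separable_sum_kronecker_of_ne_zero _ _ _ (fun _ ↦ by positivity) ?_
    (fun a _ ↦ isDensityMatrix_single a) fun a ha ↦ isDensityMatrix_lapState _ ?_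
  · rw [← sum_div, ← Nat.cast_sum, sum_card_edgeFinset_comap_prodMk hG,
      div_self (by exact_mod_cast hE.card_pos.ne')]
  · exact card_pos.mp (Nat.pos_of_ne_zero fun h ↦ ha (by simp [h]))

theorem equal_first_coordinate_edges_separable
    {α β : Type*} [Fintype α] [Fintype β] [Nonempty α] [Nonempty β]
    [DecidableEq α] [DecidableEq β]
    (G : SimpleGraph (α × β)) [DecidableRel G.Adj]
    (hE : G.edgeFinset.Nonempty)
    (hAdj : ∀ (i k : α) (j l : β), G.Adj (i, j) (k, l) → i = k) :
    Separable (lapState G) :=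
  equal_first_coordinate_edges_separable_general G hE hAdj
end
end

section
/- Let α and β be finite nonempty types and let ρ : Matrix (α × β) (α × β) ℂ be a density matrix that is block-diagonal, i.e. ρ (x,j) (y,l) = 0 whenever x ≠ y. Then ρ is separable. -/
open Matrix Kronecker ComplexOrder

noncomputable section

/-! Block-diagonality gives `ρ = ∑ₓ |x⟩⟨x| ⊗ ρₓₓ`. Each diagonal block `ρₓₓ` is a principal
submatrix of `ρ`, hence positive semidefinite, hence its trace times a density matrix (an arbitrary
one if the trace vanishes, since then the block is zero). The traces are nonnegative reals summing
to `tr ρ = 1`, so they serve as the convex weights. -/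

lemma Matrix.PosSemidef.isDensityMatrix_inv_trace_smul {n : Type*} [Fintype n]
    {A : Matrix n n ℂ} (hA : A.PosSemidef) (h : A.trace ≠ 0) :
    IsDensityMatrix (A.trace⁻¹ • A) :=
  ⟨hA.smul (inv_nonneg.mpr hA.trace_nonneg), by rw [trace_smul, smul_eq_mul, inv_mul_cancel₀ h]⟩

lemma Matrix.PosSemidef.exists_isDensityMatrix_smul_eq {n : Type*} [Fintype n] [Nonempty n]
    {A : Matrix n n ℂ} (hA : A.PosSemidef) : ∃ τ, IsDensityMatrix τ ∧ A = A.trace • τ := by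
  classical
  by_cases h : A.trace = 0
  · refine ⟨_, PosSemidef.one.isDensityMatrix_inv_trace_smul ?_, ?_⟩
    · simp [Fintype.card_ne_zero]
    · rw [h, zero_smul, ← hA.trace_eq_zero_iff, h]
  · exact ⟨_, hA.isDensityMatrix_inv_trace_smul h, by rw [smul_smul, mul_inv_cancel₀ h, one_smul]⟩

lemma isDensityMatrix_single_s7 {n : Type*} [Fintype n] [DecidableEq n] (i : n) :
    IsDensityMatrix (Matrix.single i i (1 : ℂ)) := by
  refine ⟨?_, by simp [trace_single_eq_same]⟩
  rw [← diagonal_single]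
  exact PosSemidef.diagonal (Pi.single_nonneg.mpr zero_le_one)

theorem separable_of_eq_sum_kronecker {α β ι : Type*} [Fintype α] [Fintype β] [Fintype ι]
    {ρ : Matrix (α × β) (α × β) ℂ} (p : ι → ℝ) (σ : ι → Matrix α α ℂ) (τ : ι → Matrix β β ℂ)
    (hp : ∀ i, 0 ≤ p i) (hsum : ∑ i, p i = 1) (hσ : ∀ i, IsDensityMatrix (σ i))
    (hτ : ∀ i, IsDensityMatrix (τ i)) (hρ : ρ = ∑ i, (p i : ℂ) • (σ i ⊗ₖ τ i)) :
    Separable ρ := by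
  let e := (Fintype.equivFin ι).symm
  refine ⟨Fintype.card ι, p ∘ e, σ ∘ e, τ ∘ e, fun _ => hp _, ?_, fun _ => hσ _,
    fun _ => hτ _, ?_⟩
  · rw [← hsum]; exact e.sum_comp p
  · rw [hρ]; exact (e.sum_comp fun i => (p i : ℂ) • (σ i ⊗ₖ τ i)).symm

lemma trace_eq_sum_trace_matBlock {α β : Type*} [Fintype α] [Fintype β]
    (ρ : Matrix (α × β) (α × β) ℂ) : ρ.trace = ∑ x, (matBlock ρ x x).trace :=
  Fintype.sum_prod_type _

lemma eq_sum_single_kronecker_matBlock {α β : Type*} [Fintype α] [DecidableEq α]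
    {ρ : Matrix (α × β) (α × β) ℂ} (hρ : ∀ (x y : α) (j l : β), x ≠ y → ρ (x, j) (y, l) = 0) :
    ρ = ∑ x, Matrix.single x x 1 ⊗ₖ matBlock ρ x x := by
  ext ⟨a, j⟩ ⟨b, l⟩
  rcases eq_or_ne a b with rfl | hab
  · simp [Matrix.sum_apply, single_apply, matBlock]
  · simp only [kroneckerMap_apply, Matrix.sum_apply, single_apply, hρ a b j l hab]
    refine (Finset.sum_eq_zero fun c _ => ?_).symm
    rw [if_neg (by rintro ⟨rfl, rfl⟩; exact hab rfl), zero_mul]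

theorem block_diagonal_density_separable_general
    {α β : Type*} [Fintype α] [Fintype β] [Nonempty β]
    (ρ : Matrix (α × β) (α × β) ℂ) (hρ : IsDensityMatrix ρ)
    (hzero : ∀ (x y : α) (j l : β), x ≠ y → ρ (x, j) (y, l) = 0) :
    Separable ρ := by
  classical
  obtain ⟨hpsd, htr⟩ := hρ
  have hblock (x : α) : (matBlock ρ x x).PosSemidef := hpsd.submatrix fun j => (x, j)
  choose τ hτ hτ_eq using fun x => (hblock x).exists_isDensityMatrix_smul_eq
  have hweight (x : α) : ∃ p : ℝ, 0 ≤ p ∧ (p : ℂ) = (matBlock ρ x x).trace :=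
    RCLike.nonneg_iff_exists_ofReal.mp (hblock x).trace_nonneg
  choose p hp hp_eq using hweight
  refine separable_of_eq_sum_kronecker p (fun x => Matrix.single x x 1) τ hp ?_
    isDensityMatrix_single_s7 hτ ?_
  · exact_mod_cast (Finset.sum_congr rfl fun x _ => hp_eq x).trans
      ((trace_eq_sum_trace_matBlock ρ).symm.trans htr)
  · rw [eq_sum_single_kronecker_matBlock hzero]
    refine Finset.sum_congr rfl fun x _ => ?_
    rw [hp_eq, ← kronecker_smul, ← hτ_eq]

theorem block_diagonal_density_separable
    {α β : Type*} [Fintype α] [Fintype β] [Nonempty α] [Nonempty β]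
    (ρ : Matrix (α × β) (α × β) ℂ) (hρ : IsDensityMatrix ρ)
    (hzero : ∀ (x y : α) (j l : β), x ≠ y → ρ (x, j) (y, l) = 0) :
    Separable ρ :=
  block_diagonal_density_separable_general ρ hρ hzero
end
end

section
/- Let W be a finite type with decidable equality and let G be a simple graph on Fin 2 × W with at least one edge such that for all a, b : Fin 2 and u, w : W, G.Adj (a,u) (b,w) → G.Adj (a,w) (b,u) (i.e., the graph is invariant under the partial transpose acting on the second factor). Then the graph Laplacian state ρ_G is separable (as a state on ℂ² ⊗ ℂ^W). -/
open Matrix Kronecker ComplexOrder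

noncomputable section

/-! Let `M` be the adjacency matrix of `G`, viewed as a `2 × 2` block matrix over `W`. The
hypothesis says exactly that the off-diagonal block `B = M₀₁` is symmetric (it is always the
transpose of `M₁₀`). Writing `L(A) = D_A - A` and `Q(A) = D_A + A` for the Laplacian and the
signless Laplacian of a weight matrix `A` (`D_A` the diagonal of row sums), one then has
`L(M) = |0⟩⟨0| ⊗ L(M₀₀) + |1⟩⟨1| ⊗ L(M₁₁) + ½ |+⟩⟨+| ⊗ L(B) + ½ |-⟩⟨-| ⊗ Q(B)` with
`|±⟩ = |0⟩ ± |1⟩`. For symmetric nonnegative `A`, both `L(A)` and `Q(A)` are positive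
semidefinite, being sums of the rank-one matrices `A i j • (eᵢ ∓ eⱼ)(eᵢ ∓ eⱼ)*`. So `ρ_G` is a
sum of Kronecker products of positive semidefinite matrices, and normalising each factor to
trace one exhibits it as a convex combination of product states. -/

namespace Matrix

variable {n : Type*} [Fintype n] [DecidableEq n]

def laplacian (A : Matrix n n ℂ) : Matrix n n ℂ :=
  diagonal (fun i => ∑ j, A i j) - A

def signlessLaplacian (A : Matrix n n ℂ) : Matrix n n ℂ :=
  diagonal (fun i => ∑ j, A i j) + A

theorem sum_smul_vecMulVec_single_add_smul_single {A : Matrix n n ℂ} (hA : Aᵀ = A) {ε : ℂ}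
    (hε : ε = 1 ∨ ε = -1) :
    ∑ i, ∑ j, A i j • vecMulVec (Pi.single i 1 + ε • Pi.single j 1)
        (star (Pi.single i 1 + ε • Pi.single j 1)) =
      (2 : ℂ) • (diagonal (fun i => ∑ j, A i j) + ε • A) := by
  have hAij : ∀ i j, A j i = A i j := fun i j => by rw [← transpose_apply A i j, hA]
  ext k l
  rcases hε with rfl | rfl <;>
  · simp [sum_apply, vecMulVec_apply, Pi.single_apply, diagonal_apply, mul_add,
      Finset.sum_add_distrib, mul_ite, Finset.sum_ite_eq, hAij]
    split_ifs with hkl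
    · subst hkl; ring
    · ring

theorem posSemidef_diagonal_sum_add_smul {A : Matrix n n ℂ} (hA : Aᵀ = A)
    (hA₀ : ∀ i j, 0 ≤ A i j) {ε : ℂ} (hε : ε = 1 ∨ ε = -1) :
    (diagonal (fun i => ∑ j, A i j) + ε • A).PosSemidef := by
  have h2 : ((2 : ℂ) • (diagonal (fun i => ∑ j, A i j) + ε • A)).PosSemidef := by
    rw [← sum_smul_vecMulVec_single_add_smul_single hA hε]
    exact posSemidef_sum _ fun i _ => posSemidef_sum _ fun j _ =>
      (posSemidef_vecMulVec_self_star _).smul (hA₀ i j)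
  have h := h2.smul (by positivity : (0 : ℂ) ≤ 2⁻¹)
  rwa [smul_smul, inv_mul_cancel₀ two_ne_zero, one_smul] at h

theorem posSemidef_laplacian {A : Matrix n n ℂ} (hA : Aᵀ = A) (hA₀ : ∀ i j, 0 ≤ A i j) :
    A.laplacian.PosSemidef := by
  simpa [laplacian, sub_eq_add_neg] using posSemidef_diagonal_sum_add_smul hA hA₀ (.inr rfl)

theorem posSemidef_signlessLaplacian {A : Matrix n n ℂ} (hA : Aᵀ = A)
    (hA₀ : ∀ i j, 0 ≤ A i j) : A.signlessLaplacian.PosSemidef := by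
  simpa [signlessLaplacian] using posSemidef_diagonal_sum_add_smul hA hA₀ (.inl rfl)

end Matrix

theorem Matrix.PosSemidef.exists_eq_smul_isDensityMatrix {n : Type*} [Fintype n] [Nonempty n]
    {A : Matrix n n ℂ} (hA : A.PosSemidef) :
    ∃ r : ℝ, 0 ≤ r ∧ ∃ σ, IsDensityMatrix σ ∧ A = (r : ℂ) • σ := by
  classical
  obtain ⟨hre, him⟩ := Complex.nonneg_iff.mp hA.trace_nonneg
  have htr : A.trace = (A.trace.re : ℂ) := Complex.ext rfl (by simp [him])
  by_cases h0 : A.trace = 0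
  · refine ⟨0, le_rfl, (Fintype.card n : ℂ)⁻¹ • 1, ⟨PosSemidef.one.smul (by positivity), ?_⟩, ?_⟩
    · simp [trace_smul]
    · simp [(hA.trace_eq_zero_iff).mp h0]
  · refine ⟨A.trace.re, hre, A.trace⁻¹ • A, ⟨hA.smul ?_, ?_⟩, ?_⟩
    · exact inv_nonneg.mpr hA.trace_nonneg
    · rw [trace_smul, smul_eq_mul, inv_mul_cancel₀ h0]
    · rw [← htr, smul_smul, mul_inv_cancel₀ h0, one_smul]

theorem separable_of_eq_sum_kronecker_s8 {α β ι : Type*} [Fintype α] [Fintype β] [Fintype ι]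
    {ρ : Matrix (α × β) (α × β) ℂ} (A : ι → Matrix α α ℂ) (B : ι → Matrix β β ℂ)
    (hA : ∀ i, (A i).PosSemidef) (hB : ∀ i, (B i).PosSemidef)
    (hρ : ρ = ∑ i, A i ⊗ₖ B i) (htr : ρ.trace = 1) : Separable ρ := by
  have : Nonempty (α × β) := by
    by_contra h
    rw [not_nonempty_iff] at h
    simp [trace] at htr
  obtain ⟨_, _⟩ := nonempty_prod.mp this
  choose a ha σ hσ hAσ using fun i => (hA i).exists_eq_smul_isDensityMatrix
  choose b hb τ hτ hBτ using fun i => (hB i).exists_eq_smul_isDensityMatrix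
  have hterm : ∀ i, A i ⊗ₖ B i = ((a i * b i : ℝ) : ℂ) • (σ i ⊗ₖ τ i) := fun i => by
    rw [hAσ, hBτ, smul_kronecker, kronecker_smul, smul_smul, Complex.ofReal_mul, mul_comm]
  let e := Fintype.equivFin ι
  refine ⟨Fintype.card ι, fun k => a (e.symm k) * b (e.symm k), fun k => σ (e.symm k),
    fun k => τ (e.symm k), fun k => mul_nonneg (ha _) (hb _), ?_, fun k => hσ _, fun k => hτ _, ?_⟩
  · rw [e.symm.sum_comp (fun i => a i * b i)]
    have h : ρ.trace = ((∑ i, a i * b i : ℝ) : ℂ) := by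
      simp [hρ, hterm, trace_sum, trace_smul, trace_kronecker, (hσ _).2, (hτ _).2]
    exact_mod_cast h.symm.trans htr
  · rw [hρ, ← e.symm.sum_comp]
    simp [hterm]

theorem transpose_matBlock {α β : Type*} (M : Matrix (α × β) (α × β) ℂ) (a b : α) :
    (matBlock M a b)ᵀ = matBlock Mᵀ b a :=
  rfl

theorem laplacian_eq_sum_kronecker {W : Type*} [Fintype W] [DecidableEq W]
    (M : Matrix (Fin 2 × W) (Fin 2 × W) ℂ) (h10 : matBlock M 1 0 = matBlock M 0 1) :
    M.laplacian =
      vecMulVec ![1, 0] ![1, 0] ⊗ₖ (matBlock M 0 0).laplacian +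
      vecMulVec ![0, 1] ![0, 1] ⊗ₖ (matBlock M 1 1).laplacian +
      vecMulVec ![1, 1] ![1, 1] ⊗ₖ ((2 : ℂ)⁻¹ • (matBlock M 0 1).laplacian) +
      vecMulVec ![1, -1] ![1, -1] ⊗ₖ ((2 : ℂ)⁻¹ • (matBlock M 0 1).signlessLaplacian) := by
  have hentry : ∀ j l, M (1, j) (0, l) = M (0, j) (1, l) := fun j l => congrFun (congrFun h10 j) l
  ext ⟨a, j⟩ ⟨b, l⟩
  fin_cases a <;> fin_cases b <;>
    simp [laplacian, signlessLaplacian, matBlock, diagonal_apply,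
      Fintype.sum_prod_type, hentry] <;> split_ifs <;> ring

theorem separable_smul_laplacian {W : Type*} [Fintype W] [DecidableEq W]
    {M : Matrix (Fin 2 × W) (Fin 2 × W) ℂ} (hM : Mᵀ = M) (hM₀ : ∀ x y, 0 ≤ M x y)
    (h10 : matBlock M 1 0 = matBlock M 0 1) {c : ℂ} (hc : 0 ≤ c)
    (htr : (c • M.laplacian).trace = 1) : Separable (c • M.laplacian) := by
  have hsymm : ∀ a b, (matBlock M a b)ᵀ = matBlock M b a := fun a b => by
    rw [transpose_matBlock, hM]
  have h01 : (matBlock M 0 1)ᵀ = matBlock M 0 1 := by rw [hsymm, h10]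
  have hM₀' : ∀ a b j l, 0 ≤ matBlock M a b j l := fun a b j l => hM₀ (a, j) (b, l)
  let u : Fin 4 → Fin 2 → ℂ := ![![1, 0], ![0, 1], ![1, 1], ![1, -1]]
  refine separable_of_eq_sum_kronecker_s8 (fun k => c • vecMulVec (u k) (star (u k)))
    ![(matBlock M 0 0).laplacian, (matBlock M 1 1).laplacian,
      (2 : ℂ)⁻¹ • (matBlock M 0 1).laplacian, (2 : ℂ)⁻¹ • (matBlock M 0 1).signlessLaplacian]
    (fun k => (posSemidef_vecMulVec_self_star _).smul hc) ?_ ?_ htr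
  · intro k
    fin_cases k
    · exact posSemidef_laplacian (hsymm 0 0) (hM₀' 0 0)
    · exact posSemidef_laplacian (hsymm 1 1) (hM₀' 1 1)
    · exact (posSemidef_laplacian h01 (hM₀' 0 1)).smul (by positivity)
    · exact (posSemidef_signlessLaplacian h01 (hM₀' 0 1)).smul (by positivity)
  · have hu : ∀ k, star (u k) = u k := by
      intro k
      fin_cases k <;> ext i <;> fin_cases i <;> simp [u]
    simp only [hu, smul_kronecker, ← Finset.smul_sum, Fin.sum_univ_four]
    rw [laplacian_eq_sum_kronecker M h10]
    rfl

theorem SimpleGraph.lapMatrix_eq_laplacian_adjMatrix {V : Type*} [Fintype V] [DecidableEq V]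
    (G : SimpleGraph V) [DecidableRel G.Adj] : G.lapMatrix ℂ = (G.adjMatrix ℂ).laplacian := by
  simp [lapMatrix, degMatrix, laplacian, degree_eq_sum_if_adj]

theorem trace_lapState {V : Type*} [Fintype V] [DecidableEq V] (G : SimpleGraph V)
    [DecidableRel G.Adj] (hE : G.edgeFinset.Nonempty) : (lapState G).trace = 1 := by
  have hE₀ : (2 * G.edgeFinset.card : ℂ) ≠ 0 := by
    simpa using hE.card_pos.ne'
  rw [lapState, trace_smul, SimpleGraph.lapMatrix, trace_sub, SimpleGraph.trace_adjMatrix,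
    SimpleGraph.degMatrix, trace_diagonal, ← Nat.cast_sum,
    SimpleGraph.sum_degrees_eq_twice_card_edges, smul_eq_mul, sub_zero]
  push_cast
  exact inv_mul_cancel₀ hE₀

theorem partial_transpose_invariant_graph_separable_general
    {W : Type*} [Fintype W] [DecidableEq W]
    (G : SimpleGraph (Fin 2 × W)) [DecidableRel G.Adj]
    (hE : G.edgeFinset.Nonempty)
    (hAdj : ∀ (a b : Fin 2) (u w : W), G.Adj (a, u) (b, w) → G.Adj (a, w) (b, u)) :
    Separable (lapState G) := by
  have h10 : matBlock (G.adjMatrix ℂ) 1 0 = matBlock (G.adjMatrix ℂ) 0 1 := by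
    ext j l
    simp only [matBlock, of_apply, SimpleGraph.adjMatrix_apply]
    exact if_congr ⟨fun h => hAdj 0 1 l j h.symm, fun h => (hAdj 0 1 j l h).symm⟩ rfl rfl
  have hM₀ : ∀ x y, 0 ≤ G.adjMatrix ℂ x y := fun x y => by
    rw [SimpleGraph.adjMatrix_apply]
    split_ifs <;> norm_num
  have htr := trace_lapState G hE
  rw [lapState, G.lapMatrix_eq_laplacian_adjMatrix] at htr ⊢
  exact separable_smul_laplacian G.transpose_adjMatrix hM₀ h10 (by positivity) htr

theorem partial_transpose_invariant_graph_separable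
    {W : Type*} [Fintype W] [DecidableEq W] [Nonempty W]
    (G : SimpleGraph (Fin 2 × W)) [DecidableRel G.Adj]
    (hE : G.edgeFinset.Nonempty)
    (hAdj : ∀ (a b : Fin 2) (u w : W), G.Adj (a, u) (b, w) → G.Adj (a, w) (b, u)) :
    Separable (lapState G) :=
  partial_transpose_invariant_graph_separable_general G hE hAdj
end
end

section
/- Let W be a finite type with decidable equality and let G be a simple graph on W × Fin 2 with at least one edge such that for all w, w' : W and all a, b : Fin 2 with a ≠ b, if G.Adj (w,a) (w',b) then G.Adj (w, 1−a) (w', 1−b) (every edge between vertices whose parity labels differ is accompanied by the edge with both parity labels flipped). Then the graph Laplacian state ρ_G is separable (as a state on ℂ^W ⊗ ℂ²). -/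
/-!
The Laplacian is `∑ |e_u - e_v⟩⟨e_u - e_v| / 2` over the ordered adjacent pairs `(u, v)`.
Exchanging the parity labels, `((w, a), (w', b)) ↦ ((w, b), (w', a))`, permutes these pairs
(for `a ≠ b` in `Fin 2` this is the hypothesis, since `1 - a = b`), and it pairs
`x = e_(w,a) - e_(w',b)` with `y = e_(w,b) - e_(w',a)`. By polarization
`|x⟩⟨x| + |y⟩⟨y| = (|x + y⟩⟨x + y| + |x - y⟩⟨x - y|) / 2`, and
`x + y = (e_w - e_w') ⊗ (e_a + e_b)`, `x - y = (e_w + e_w') ⊗ (e_a - e_b)` are product vectors.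
So the Laplacian lies in the cone generated by product states, and dividing by its trace
`2 |E|` makes it separable.
-/

open Matrix Kronecker ComplexOrder

noncomputable section

section Vectors

variable {α β : Type*}

def kroneckerVec {R : Type*} [Mul R] (u : α → R) (v : β → R) : α × β → R :=
  fun p => u p.1 * v p.2

lemma kroneckerVec_single {R : Type*} [MulZeroOneClass R] [DecidableEq α] [DecidableEq β]
    (a : α) (b : β) :
    kroneckerVec (Pi.single a (1 : R)) (Pi.single b 1) = Pi.single (a, b) 1 := by
  ext ⟨x, y⟩
  by_cases hx : x = a <;> by_cases hy : y = b <;> simp [kroneckerVec, hx, hy]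

lemma kronecker_vecMulVec {R : Type*} [CommSemiring R] (u u' : α → R) (v v' : β → R) :
    vecMulVec u u' ⊗ₖ vecMulVec v v' = vecMulVec (kroneckerVec u v) (kroneckerVec u' v') := by
  ext ⟨x, i⟩ ⟨y, j⟩
  simp only [kroneckerMap_apply, vecMulVec_apply, kroneckerVec]
  ring

lemma star_kroneckerVec {R : Type*} [CommSemiring R] [StarRing R] (u : α → R) (v : β → R) :
    star (kroneckerVec u v) = kroneckerVec (star u) (star v) := by
  ext p
  simp [kroneckerVec]

lemma vecMulVec_add_vecMulVec_sub {n R : Type*} [CommRing R] [StarRing R] (x y : n → R) :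
    vecMulVec (x + y) (star (x + y)) + vecMulVec (x - y) (star (x - y))
      = 2 • (vecMulVec x (star x) + vecMulVec y (star y)) := by
  simp only [star_add, star_sub, add_vecMulVec, sub_vecMulVec, vecMulVec_add, vecMulVec_sub]
  abel

def exchangeSnd : (α × β) × (α × β) ≃ (α × β) × (α × β) where
  toFun q := ((q.1.1, q.2.2), (q.2.1, q.1.2))
  invFun q := ((q.1.1, q.2.2), (q.2.1, q.1.2))
  left_inv _ := rfl
  right_inv _ := rfl

end Vectors

section Graph

variable {V : Type*} [Fintype V] [DecidableEq V] (G : SimpleGraph V) [DecidableRel G.Adj]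

lemma SimpleGraph.trace_lapMatrix_s14 {R : Type*} [Ring R] :
    (G.lapMatrix R).trace = 2 * G.edgeFinset.card := by
  simp [SimpleGraph.lapMatrix, SimpleGraph.degMatrix, SimpleGraph.adjMatrix, Matrix.trace,
    ← Nat.cast_sum, G.sum_degrees_eq_twice_card_edges]

lemma SimpleGraph.lapMatrix_eq_sum {R : Type*} [CommRing R] :
    G.lapMatrix R = ∑ q ∈ Finset.univ.filter (fun q : V × V => G.Adj q.1 q.2),
      vecMulVec (Pi.single q.1 1) (Pi.single q.1 1 - Pi.single q.2 1) := by
  ext x y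
  rw [Matrix.sum_apply, Finset.sum_filter, Fintype.sum_prod_type,
    Finset.sum_eq_single x (fun u _ hu => Finset.sum_eq_zero fun v _ => by
      simp [vecMulVec_apply, Pi.single_apply, Ne.symm hu]) (by simp),
    ← Finset.sum_filter, ← G.neighborFinset_eq_filter]
  simp [vecMulVec_apply, Finset.sum_sub_distrib, SimpleGraph.lapMatrix, SimpleGraph.degMatrix,
    SimpleGraph.adjMatrix, Pi.single_apply, diagonal_apply, eq_comm]

lemma SimpleGraph.two_smul_lapMatrix_eq_sum {R : Type*} [CommRing R] [StarRing R] :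
    (2 : R) • G.lapMatrix R = ∑ q ∈ Finset.univ.filter (fun q : V × V => G.Adj q.1 q.2),
      vecMulVec (Pi.single q.1 1 - Pi.single q.2 1) (star (Pi.single q.1 1 - Pi.single q.2 1)) := by
  have hswap : ∑ q ∈ Finset.univ.filter (fun q : V × V => G.Adj q.1 q.2),
      vecMulVec (Pi.single q.2 (1 : R)) (Pi.single q.2 1 - Pi.single q.1 1) = G.lapMatrix R := by
    rw [G.lapMatrix_eq_sum]
    exact Finset.sum_equiv (Equiv.prodComm V V) (by simp [G.adj_comm]) (by simp)
  rw [two_smul]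
  nth_rw 1 [G.lapMatrix_eq_sum]
  rw [← hswap, ← Finset.sum_add_distrib]
  refine Finset.sum_congr rfl fun q _ => ?_
  simp only [star_sub, Pi.star_single, star_one, sub_vecMulVec, vecMulVec_sub]
  abel

end Graph

section SeparableCone

def separableCone (α β : Type*) [Fintype α] [Fintype β] :
    PointedCone ℝ (Matrix (α × β) (α × β) ℂ) :=
  PointedCone.hull ℝ
    (Set.image2 (· ⊗ₖ ·) {σ : Matrix α α ℂ | IsDensityMatrix σ}
      {τ : Matrix β β ℂ | IsDensityMatrix τ})

variable {α β : Type*} [Fintype α] [Fintype β]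

lemma exists_sum_of_mem_separableCone {M : Matrix (α × β) (α × β) ℂ}
    (hM : M ∈ separableCone α β) :
    ∃ (n : ℕ) (p : Fin n → ℝ) (σ : Fin n → Matrix α α ℂ) (τ : Fin n → Matrix β β ℂ),
      (∀ k, 0 ≤ p k) ∧ (∀ k, IsDensityMatrix (σ k)) ∧ (∀ k, IsDensityMatrix (τ k)) ∧
      M = ∑ k, (p k : ℂ) • (σ k ⊗ₖ τ k) := by
  induction hM using Submodule.span_induction with
  | mem M hM =>
    obtain ⟨σ, hσ, τ, hτ, rfl⟩ := hM
    exact ⟨1, fun _ => 1, fun _ => σ, fun _ => τ, fun _ => zero_le_one, fun _ => hσ,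
      fun _ => hτ, by simp⟩
  | zero => exact ⟨0, Fin.elim0, Fin.elim0, Fin.elim0, Fin.rec0, Fin.rec0, Fin.rec0, by simp⟩
  | add M N _ _ hM hN =>
    obtain ⟨n, p, σ, τ, hp, hσ, hτ, rfl⟩ := hM
    obtain ⟨m, q, σ', τ', hq, hσ', hτ', rfl⟩ := hN
    refine ⟨n + m, Fin.append p q, Fin.append σ σ', Fin.append τ τ', ?_, ?_, ?_, ?_⟩
    · exact Fin.addCases (by simpa using hp) (by simpa using hq)
    · exact Fin.addCases (by simpa using hσ) (by simpa using hσ')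
    · exact Fin.addCases (by simpa using hτ) (by simpa using hτ')
    · simp [Fin.sum_univ_add]
  | smul c M _ hM =>
    obtain ⟨n, p, σ, τ, hp, hσ, hτ, rfl⟩ := hM
    refine ⟨n, fun k => c * p k, σ, τ, fun k => mul_nonneg c.2 (hp k), hσ, hτ, ?_⟩
    rw [Finset.smul_sum]
    refine Finset.sum_congr rfl fun k _ => ?_
    rw [Complex.ofReal_mul, mul_smul]
    rfl

lemma separable_of_mem_separableCone {M : Matrix (α × β) (α × β) ℂ}
    (hM : M ∈ separableCone α β) (htr : M.trace = 1) : Separable M := by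
  obtain ⟨n, p, σ, τ, hp, hσ, hτ, rfl⟩ := exists_sum_of_mem_separableCone hM
  refine ⟨n, p, σ, τ, hp, ?_, hσ, hτ, rfl⟩
  have : ((∑ k, p k : ℝ) : ℂ) = 1 := by
    simpa [trace_sum, trace_smul, trace_kronecker, (hσ _).2, (hτ _).2] using htr
  exact_mod_cast this

lemma Matrix.PosSemidef.exists_eq_smul_isDensityMatrix_s14 {A : Matrix α α ℂ} (hA : A.PosSemidef)
    (h0 : A ≠ 0) : ∃ t : ℝ, 0 < t ∧ ∃ σ, IsDensityMatrix σ ∧ A = t • σ := by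
  set t := A.trace.re
  have htr : A.trace = t :=
    Complex.eq_re_of_ofReal_le (r := 0) (by simpa using hA.trace_nonneg)
  have ht : 0 < t := by
    refine lt_of_le_of_ne (Complex.zero_le_real.mp (htr ▸ hA.trace_nonneg)) fun h => h0 ?_
    rw [← hA.trace_eq_zero_iff, htr, ← h, Complex.ofReal_zero]
  refine ⟨t, ht, t⁻¹ • A, ⟨hA.smul (inv_nonneg.mpr ht.le), ?_⟩,
    by rw [smul_inv_smul₀ ht.ne']⟩
  rw [trace_smul, htr, Complex.real_smul, Complex.ofReal_inv,
    inv_mul_cancel₀ (Complex.ofReal_ne_zero.mpr ht.ne')]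

lemma kronecker_mem_separableCone {A : Matrix α α ℂ} {B : Matrix β β ℂ} (hA : A.PosSemidef)
    (hB : B.PosSemidef) : A ⊗ₖ B ∈ separableCone α β := by
  rcases eq_or_ne A 0 with rfl | hA0
  · simp
  rcases eq_or_ne B 0 with rfl | hB0
  · simp
  obtain ⟨s, hs, σ, hσ, rfl⟩ := hA.exists_eq_smul_isDensityMatrix_s14 hA0
  obtain ⟨t, ht, τ, hτ, rfl⟩ := hB.exists_eq_smul_isDensityMatrix_s14 hB0
  rw [smul_kronecker, kronecker_smul, smul_smul]
  exact PointedCone.smul_mem _ (by positivity)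
    (PointedCone.subset_hull (Set.mem_image2_of_mem hσ hτ))

lemma vecMulVec_kroneckerVec_mem_separableCone (u : α → ℂ) (v : β → ℂ) :
    vecMulVec (kroneckerVec u v) (star (kroneckerVec u v)) ∈ separableCone α β := by
  rw [star_kroneckerVec, ← kronecker_vecMulVec]
  exact kronecker_mem_separableCone (posSemidef_vecMulVec_self_star u)
    (posSemidef_vecMulVec_self_star v)

lemma vecMulVec_kroneckerVec_sub_add_exchange_mem_separableCone (u u' : α → ℂ)
    (v v' : β → ℂ) :
    vecMulVec (kroneckerVec u v - kroneckerVec u' v')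
        (star (kroneckerVec u v - kroneckerVec u' v'))
      + vecMulVec (kroneckerVec u v' - kroneckerVec u' v)
        (star (kroneckerVec u v' - kroneckerVec u' v))
      ∈ separableCone α β := by
  have hplus : kroneckerVec u v - kroneckerVec u' v' + (kroneckerVec u v' - kroneckerVec u' v)
      = kroneckerVec (u - u') (v + v') := by
    ext p; simp only [kroneckerVec, Pi.add_apply, Pi.sub_apply]; ring
  have hminus : kroneckerVec u v - kroneckerVec u' v' - (kroneckerVec u v' - kroneckerVec u' v)
      = kroneckerVec (u + u') (v - v') := by
    ext p; simp only [kroneckerVec, Pi.add_apply, Pi.sub_apply]; ring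
  refine ((separableCone α β).smul_mem_iff (two_pos (α := ℝ))).mp ?_
  rw [two_smul, ← two_nsmul, ← vecMulVec_add_vecMulVec_sub, hplus, hminus]
  exact add_mem (vecMulVec_kroneckerVec_mem_separableCone _ _)
    (vecMulVec_kroneckerVec_mem_separableCone _ _)

lemma SimpleGraph.lapMatrix_mem_separableCone [DecidableEq α] [DecidableEq β]
    (G : SimpleGraph (α × β)) [DecidableRel G.Adj]
    (hG : ∀ w w' a b, G.Adj (w, a) (w', b) → G.Adj (w, b) (w', a)) :
    G.lapMatrix ℂ ∈ separableCone α β := by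
  set D := Finset.univ.filter (fun q : (α × β) × (α × β) => G.Adj q.1 q.2)
  set P : (α × β) × (α × β) → Matrix (α × β) (α × β) ℂ := fun q =>
    vecMulVec (Pi.single q.1 1 - Pi.single q.2 1) (star (Pi.single q.1 1 - Pi.single q.2 1))
  have hD : ∀ q, q ∈ D ↔ exchangeSnd q ∈ D := by
    rintro ⟨⟨w, a⟩, ⟨w', b⟩⟩
    simpa [D, exchangeSnd] using ⟨hG w w' a b, hG w w' b a⟩
  have hpair : ∀ q, P q + P (exchangeSnd q) ∈ separableCone α β := by
    rintro ⟨⟨w, a⟩, ⟨w', b⟩⟩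
    simp only [P, exchangeSnd, Equiv.coe_fn_mk, ← kroneckerVec_single]
    exact vecMulVec_kroneckerVec_sub_add_exchange_mem_separableCone _ _ _ _
  have hfour : (4 : ℝ) • G.lapMatrix ℂ = ∑ q ∈ D, (P q + P (exchangeSnd q)) := by
    rw [Finset.sum_add_distrib, Finset.sum_equiv exchangeSnd hD fun _ _ => rfl, ← two_smul ℂ,
      ← G.two_smul_lapMatrix_eq_sum, smul_smul, ← Complex.coe_smul]
    norm_num
  refine ((separableCone α β).smul_mem_iff (by norm_num : (0 : ℝ) < 4)).mp ?_
  rw [hfour]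
  exact Submodule.sum_mem _ fun q _ => hpair q

end SeparableCone

theorem parity_flip_closed_separable_general
    {W : Type*} [Fintype W] [DecidableEq W]
    (G : SimpleGraph (W × Fin 2)) [DecidableRel G.Adj]
    (hE : G.edgeFinset.Nonempty)
    (hAdj : ∀ (w w' : W) (a b : Fin 2), a ≠ b →
      G.Adj (w, a) (w', b) → G.Adj (w, 1 - a) (w', 1 - b)) :
    Separable (lapState G) := by
  have hG : ∀ w w' a b, G.Adj (w, a) (w', b) → G.Adj (w, b) (w', a) := by
    intro w w' a b h
    rcases eq_or_ne a b with rfl | hab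
    · exact h
    · have one_sub_eq : ∀ c d : Fin 2, c ≠ d → 1 - c = d := by decide
      simpa [one_sub_eq a b hab, one_sub_eq b a hab.symm] using hAdj w w' a b hab h
  have hm : (0 : ℝ) < 2 * G.edgeFinset.card := by have := hE.card_pos; positivity
  refine separable_of_mem_separableCone ?_ ?_
  · have hcast :
        ((2 * G.edgeFinset.card : ℂ))⁻¹ = (((2 * G.edgeFinset.card : ℝ))⁻¹ : ℝ) := by
      push_cast; rfl
    rw [lapState, hcast, Complex.coe_smul]
    exact PointedCone.smul_mem _ (inv_nonneg.mpr hm.le) (G.lapMatrix_mem_separableCone hG)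
  · rw [lapState, trace_smul, G.trace_lapMatrix_s14, smul_eq_mul]
    exact inv_mul_cancel₀ (by exact_mod_cast hm.ne')

theorem parity_flip_closed_separable
    {W : Type*} [Fintype W] [DecidableEq W] [Nonempty W]
    (G : SimpleGraph (W × Fin 2)) [DecidableRel G.Adj]
    (hE : G.edgeFinset.Nonempty)
    (hAdj : ∀ (w w' : W) (a b : Fin 2), a ≠ b →
      G.Adj (w, a) (w', b) → G.Adj (w, 1 - a) (w', 1 - b)) :
    Separable (lapState G) :=
  parity_flip_closed_separable_general G hE hAdj
end
end
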